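/- arXiv:1711.05641 — 3 statements merged into one kernel-verified Lean document; each statement's English description precedes it below -/
import Mathlib

section
/- For every q ∈ L^∞(Ω) with positive essential infimum, q(x) = sup{ψ(x) : ψ ∈ Σ₊, ψ ≤ q a.e.} for almost every x ∈ Ω, where Σ₊ is the set of density one simple functions on Ω with positive essential infimum. -/
/-!
Upper bound: if `ψ ∈ Σ₊` and `ψ ≤ q` a.e., then near a point `x` the function `ψ` is at least
`ψ(x)` on the intersection of the density one sets `Mⱼ` containing `x`, a set of density one at
`x`. If `ψ(x) > t > q(x)` for a rational `t`, and `x` is a density point of `{q < t}` (true for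
a.e. `x`, simultaneously for all rational `t`), then `{q < t ≤ ψ}` would have positive measure.

Lower bound: for a base level `0 < b ≤ ess inf q` and `t > b`, the step function
`b χ_Ω + (t - b) χ_D`, with `D` the density points of `{t ≤ q}`, lies in `Σ₊` and stays below
`q`; it takes the value `t` at every point of `D`, which for rational `t` covers a.e. `x` with
`t ≤ q(x)`.
-/

open MeasureTheory Filter Topology

variable {n : ℕ}

/-- `x` is a Lebesgue density one point of the set `E`. -/
def DensityOnePt (E : Set (EuclideanSpace ℝ (Fin n))) (x : EuclideanSpace ℝ (Fin n)) : Prop :=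
  Tendsto (fun r : ℝ => volume (E ∩ Metric.ball x r) / volume (Metric.ball x r))
    (nhdsWithin 0 (Set.Ioi 0)) (nhds 1)

/-- A density one set: non-empty, measurable, and has Lebesgue density one at all of its points. -/
def DensityOneSet (M : Set (EuclideanSpace ℝ (Fin n))) : Prop :=
  M.Nonempty ∧ MeasurableSet M ∧ ∀ x ∈ M, DensityOnePt M x

/-- `Σ₊`: density one simple functions on `Ω` with positive essential infimum, i.e.
`ψ = ∑ⱼ aⱼ χ_{Mⱼ}` with all `aⱼ > 0`, `Mⱼ ⊆ Ω` density one sets, and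
`Ω \ ⋃ⱼ Mⱼ` a Lebesgue null set. -/
def SigmaPlus (Ω : Set (EuclideanSpace ℝ (Fin n)))
    (ψ : EuclideanSpace ℝ (Fin n) → ℝ) : Prop :=
  ∃ (m : ℕ) (a : Fin m → ℝ) (M : Fin m → Set (EuclideanSpace ℝ (Fin n))),
    (∀ j, 0 < a j ∧ DensityOneSet (M j) ∧ M j ⊆ Ω) ∧
    volume (Ω \ ⋃ j, M j) = 0 ∧
    ∀ x, ψ x = ∑ j, a j * Set.indicator (M j) (fun _ => (1 : ℝ)) x

open Set Metric

lemma sum_mul_indicator_one_le {ι α : Type*} [Fintype ι] {a : ι → ℝ} (ha : ∀ i, 0 ≤ a i)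
    {M : ι → Set α} {x y : α} (hxy : ∀ i, x ∈ M i → y ∈ M i) :
    ∑ i, a i * (M i).indicator (fun _ => (1 : ℝ)) x ≤
      ∑ i, a i * (M i).indicator (fun _ => (1 : ℝ)) y := by
  refine Finset.sum_le_sum fun i _ => mul_le_mul_of_nonneg_left ?_ (ha i)
  by_cases hx : x ∈ M i
  · simp [hx, hxy i hx]
  · simp [hx, indicator_nonneg]

section DensityPoints

variable {A B N : Set (EuclideanSpace ℝ (Fin n))} {x : EuclideanSpace ℝ (Fin n)}

lemma closedBall_ae_eq_ball (x : EuclideanSpace ℝ (Fin n)) {r : ℝ} (hr : r ≠ 0) :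
    closedBall x r =ᵐ[volume] ball x r :=
  ae_eq_set.2 ⟨by rw [closedBall_sdiff_ball]; exact Measure.addHaar_sphere_of_ne_zero _ x hr,
    by rw [sdiff_eq_empty.2 ball_subset_closedBall, measure_empty]⟩

lemma measure_inter_ball_div_le_one (A : Set (EuclideanSpace ℝ (Fin n)))
    (x : EuclideanSpace ℝ (Fin n)) (r : ℝ) : volume (A ∩ ball x r) / volume (ball x r) ≤ 1 :=
  ENNReal.div_le_of_le_mul (by rw [one_mul]; exact measure_mono inter_subset_right)

lemma IsOpen.densityOnePt (hA : IsOpen A) (hx : x ∈ A) : DensityOnePt A x := by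
  obtain ⟨ε, hε, hball⟩ := Metric.isOpen_iff.1 hA x hx
  refine tendsto_const_nhds.congr' ?_
  filter_upwards [Ioo_mem_nhdsGT hε] with r hr
  rw [inter_eq_self_of_subset_right ((ball_subset_ball hr.2.le).trans hball),
    ENNReal.div_self (measure_ball_pos volume x hr.1).ne' measure_ball_lt_top.ne]

lemma IsOpen.densityOneSet (hA : IsOpen A) (hne : A.Nonempty) : DensityOneSet A :=
  ⟨hne, hA.measurableSet, fun _ hx => hA.densityOnePt hx⟩

lemma DensityOnePt.measure_pos (h : DensityOnePt A x) : 0 < volume A := by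
  refine pos_iff_ne_zero.2 fun hA => zero_ne_one (tendsto_nhds_unique ?_ h)
  simp [measure_mono_null inter_subset_left hA]

lemma DensityOnePt.diff_null (h : DensityOnePt A x) (hN : volume N = 0) :
    DensityOnePt (A \ N) x :=
  h.congr fun r => by rw [sdiff_inter_right_comm, measure_sdiff_null hN]

/-- Inclusion–exclusion gives `ρ(A ∩ B) ≥ ρ(A) + ρ(B) - 1` for the density ratios `ρ`. -/
lemma DensityOnePt.inter (hA : DensityOnePt A x) (hB : DensityOnePt B x) (hBm : MeasurableSet B) :
    DensityOnePt (A ∩ B) x := by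
  have hlower : Tendsto (fun r => volume (A ∩ ball x r) / volume (ball x r)
      + volume (B ∩ ball x r) / volume (ball x r) - 1) (𝓝[>] 0) (𝓝 1) := by
    simpa using ENNReal.Tendsto.sub (hA.add hB) tendsto_const_nhds (Or.inr ENNReal.one_ne_top)
  refine tendsto_of_tendsto_of_tendsto_of_le_of_le' hlower tendsto_const_nhds ?_
    (Eventually.of_forall fun r => measure_inter_ball_div_le_one _ x r)
  filter_upwards [self_mem_nhdsWithin] with r (hr : 0 < r)
  have hV : volume (ball x r) ≠ 0 := (measure_ball_pos volume x hr).ne'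
  have hincl_excl : volume (A ∩ ball x r) + volume (B ∩ ball x r) ≤
      volume (A ∩ B ∩ ball x r) + volume (ball x r) := by
    rw [← measure_union_add_inter _ (hBm.inter measurableSet_ball), add_comm,
      ← inter_inter_distrib_right]
    gcongr
    exact union_subset inter_subset_right inter_subset_right
  rw [tsub_le_iff_right, ENNReal.div_add_div_same,
    ← ENNReal.div_self hV measure_ball_lt_top.ne, ENNReal.div_add_div_same]
  gcongr

lemma DensityOnePt.inter_biInter {ι : Type*} [DecidableEq ι] {s : Finset ι}
    {M : ι → Set (EuclideanSpace ℝ (Fin n))} (hA : DensityOnePt A x)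
    (hM : ∀ i ∈ s, MeasurableSet (M i) ∧ DensityOnePt (M i) x) :
    DensityOnePt (A ∩ ⋂ i ∈ s, M i) x := by
  induction s using Finset.induction_on with
  | empty => simpa using hA
  | insert i s _ ih =>
    rw [Finset.set_biInter_insert, inter_left_comm, inter_comm]
    obtain ⟨hMm, hMx⟩ := hM i (Finset.mem_insert_self i s)
    exact (ih fun j hj => hM j (Finset.mem_insert_of_mem hj)).inter hMx hMm

/-- Lebesgue's density theorem, read off from Besicovitch's differentiation theorem. -/
lemma ae_densityOnePt (hA : MeasurableSet A) : ∀ᵐ x, x ∈ A → DensityOnePt A x := by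
  filter_upwards [Besicovitch.ae_tendsto_measure_inter_div_of_measurableSet volume hA]
    with x hx hxA
  rw [indicator_of_mem hxA, Pi.one_apply] at hx
  refine hx.congr' ?_
  filter_upwards [self_mem_nhdsWithin] with r (hr : 0 < r)
  rw [measure_congr ((EventuallyEq.refl _ A).inter (closedBall_ae_eq_ball x hr.ne')),
    measure_congr (closedBall_ae_eq_ball x hr.ne')]

/-- A measurable set of density points of `A` that has full measure in `A`. -/
def densityCore (A : Set (EuclideanSpace ℝ (Fin n))) : Set (EuclideanSpace ℝ (Fin n)) :=
  A \ toMeasurable volume {x | ¬(x ∈ A → DensityOnePt A x)}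

lemma densityCore_subset (A : Set (EuclideanSpace ℝ (Fin n))) : densityCore A ⊆ A :=
  sdiff_subset

lemma measurableSet_densityCore (hA : MeasurableSet A) : MeasurableSet (densityCore A) :=
  hA.diff (measurableSet_toMeasurable _ _)

lemma measure_toMeasurable_not_densityOnePt (hA : MeasurableSet A) :
    volume (toMeasurable volume {x | ¬(x ∈ A → DensityOnePt A x)}) = 0 := by
  rw [measure_toMeasurable]
  exact ae_iff.1 (ae_densityOnePt hA)

lemma ae_mem_densityCore (hA : MeasurableSet A) : ∀ᵐ x, x ∈ A → x ∈ densityCore A := by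
  filter_upwards [measure_eq_zero_iff_ae_notMem.1 (measure_toMeasurable_not_densityOnePt hA)]
    with x hx hxA using ⟨hxA, hx⟩

lemma densityOnePt_densityCore (hA : MeasurableSet A) (hx : x ∈ densityCore A) :
    DensityOnePt (densityCore A) x := by
  have hAx : DensityOnePt A x := by
    by_contra h
    exact hx.2 (subset_toMeasurable _ _ fun h' => h (h' hx.1))
  exact hAx.diff_null (measure_toMeasurable_not_densityOnePt hA)

lemma densityOneSet_densityCore (hA : MeasurableSet A) (hx : x ∈ densityCore A) :
    DensityOneSet (densityCore A) :=
  ⟨⟨x, hx⟩, measurableSet_densityCore hA, fun _ hy => densityOnePt_densityCore hA hy⟩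

end DensityPoints

section SigmaPlus

variable {Ω : Set (EuclideanSpace ℝ (Fin n))} {ψ f : EuclideanSpace ℝ (Fin n) → ℝ}
  {x : EuclideanSpace ℝ (Fin n)}

lemma sigmaPlus_indicator_add_indicator {D : Set (EuclideanSpace ℝ (Fin n))} {a b : ℝ}
    (hΩ : DensityOneSet Ω) (hD : DensityOneSet D) (hDΩ : D ⊆ Ω) (ha : 0 < a) (hb : 0 < b) :
    SigmaPlus Ω fun y => a * Ω.indicator (fun _ => 1) y + b * D.indicator (fun _ => 1) y := by
  refine ⟨2, ![a, b], ![Ω, D], fun j => ?_, ?_, fun y => by simp [Fin.sum_univ_two]⟩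
  · fin_cases j
    exacts [⟨ha, hΩ, subset_rfl⟩, ⟨hb, hD, hDΩ⟩]
  · refine measure_mono_null (fun y hy => hy.2 (mem_iUnion.2 ⟨0, ?_⟩)) measure_empty
    simpa using hy.1

lemma SigmaPlus.le_of_ae_le (hψ : SigmaPlus Ω ψ) (hΩ : MeasurableSet Ω) (hf : Measurable f)
    (hψf : ∀ᵐ y ∂volume.restrict Ω, ψ y ≤ f y) (hxΩ : x ∈ Ω)
    (hx : ∀ t : ℚ, x ∈ Ω ∩ {y | f y < t} → x ∈ densityCore (Ω ∩ {y | f y < t})) :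
    ψ x ≤ f x := by
  classical
  obtain ⟨m, a, M, hM, -, hψeq⟩ := hψ
  by_contra! hlt
  obtain ⟨t, hft, htψ⟩ := exists_rat_btwn hlt
  have hL : MeasurableSet (Ω ∩ {y | f y < t}) := hΩ.inter (measurableSet_lt hf measurable_const)
  set F := densityCore (Ω ∩ {y | f y < t}) ∩ ⋂ j ∈ Finset.univ.filter (x ∈ M ·), M j
  have hFx : DensityOnePt F x :=
    (densityOnePt_densityCore hL (hx t ⟨hxΩ, hft⟩)).inter_biInter fun j hj =>
      ⟨(hM j).2.1.2.1, (hM j).2.1.2.2 x (Finset.mem_filter.1 hj).2⟩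
  have hFbad : F ⊆ {y | ¬(y ∈ Ω → ψ y ≤ f y)} := by
    rintro y ⟨hyL, hyM⟩
    obtain ⟨hyΩ, hyt⟩ := densityCore_subset _ hyL
    have hψxy : ψ x ≤ ψ y := by
      rw [hψeq, hψeq]
      refine sum_mul_indicator_one_le (fun j => (hM j).1.le) fun j hj => ?_
      exact mem_iInter₂.1 hyM j (Finset.mem_filter.2 ⟨Finset.mem_univ j, hj⟩)
    exact fun h => (h hyΩ).not_gt (hyt.trans (htψ.trans_le hψxy))
  exact hFx.measure_pos.ne'
    (measure_mono_null hFbad (ae_iff.1 ((ae_restrict_iff' hΩ).1 hψf)))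

lemma exists_sigmaPlus_ae_le_eq (hΩ : IsOpen Ω) (hf : Measurable f) {b t : ℝ} (hb : 0 < b)
    (hbf : ∀ᵐ y ∂volume.restrict Ω, b ≤ f y) (hbt : b < t) (hxΩ : x ∈ Ω)
    (hx : x ∈ densityCore (Ω ∩ {y | t ≤ f y})) :
    ∃ ψ, SigmaPlus Ω ψ ∧ (∀ᵐ y ∂volume.restrict Ω, ψ y ≤ f y) ∧ t = ψ x := by
  have hU : MeasurableSet (Ω ∩ {y | t ≤ f y}) :=
    hΩ.measurableSet.inter (measurableSet_le measurable_const hf)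
  refine ⟨_, sigmaPlus_indicator_add_indicator (hΩ.densityOneSet ⟨x, hxΩ⟩)
    (densityOneSet_densityCore hU hx) ((densityCore_subset _).trans inter_subset_left) hb
    (sub_pos.2 hbt), ?_, by simp [hxΩ, indicator_of_mem hx]⟩
  filter_upwards [hbf, ae_restrict_mem hΩ.measurableSet] with y hby hyΩ
  by_cases hyD : y ∈ densityCore (Ω ∩ {y | t ≤ f y})
  · simpa [hyΩ, hyD] using (densityCore_subset _ hyD).2
  · simpa [hyΩ, hyD] using hby

lemma ae_isLUB_sigmaPlus (hΩ : IsOpen Ω) (hf : Measurable f) {c : ℝ} (hc : 0 < c)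
    (hcf : ∀ᵐ y ∂volume.restrict Ω, c ≤ f y) :
    ∀ᵐ x ∂volume.restrict Ω, IsLUB {t | ∃ ψ, SigmaPlus Ω ψ ∧
      (∀ᵐ y ∂volume.restrict Ω, ψ y ≤ f y) ∧ t = ψ x} (f x) := by
  have hlevels : ∀ᵐ x, ∀ t : ℚ,
      (x ∈ Ω ∩ {y | f y < t} → x ∈ densityCore (Ω ∩ {y | f y < t})) ∧
      (x ∈ Ω ∩ {y | t ≤ f y} → x ∈ densityCore (Ω ∩ {y | t ≤ f y})) :=
    ae_all_iff.2 fun t =>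
      (ae_mem_densityCore (hΩ.measurableSet.inter (measurableSet_lt hf measurable_const))).and
        (ae_mem_densityCore (hΩ.measurableSet.inter (measurableSet_le measurable_const hf)))
  filter_upwards [ae_restrict_mem hΩ.measurableSet, hcf, ae_restrict_of_ae hlevels]
    with x hxΩ hcx hx
  refine ⟨?_, fun s hs => ?_⟩
  · rintro _ ⟨ψ, hψ, hψf, rfl⟩
    exact hψ.le_of_ae_le hΩ.measurableSet hf hψf hxΩ fun t => (hx t).1
  · by_contra! hsf
    -- base level `c / 2`, not `c`: the step `t - c / 2` must be positive even if `f x = c`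
    obtain ⟨t, hst, htf⟩ := exists_rat_btwn (max_lt hsf ((half_lt_self hc).trans_le hcx))
    obtain ⟨ψ, hψ⟩ := exists_sigmaPlus_ae_le_eq hΩ hf (half_pos hc)
      (hcf.mono fun y hy => (half_le_self hc.le).trans hy) ((le_max_right _ _).trans_lt hst)
      hxΩ ((hx t).2 ⟨hxΩ, htf.le⟩)
    exact ((le_max_left _ _).trans_lt hst).not_ge (hs ⟨ψ, hψ⟩)

end SigmaPlus

theorem sup_density_one_simple_functions_general
    (Ω : Set (EuclideanSpace ℝ (Fin n))) (hΩ : IsOpen Ω)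
    (q : EuclideanSpace ℝ (Fin n) → ℝ)
    (hq : MemLp q ⊤ (volume.restrict Ω))
    (hqpos : ∃ c > (0 : ℝ), ∀ᵐ x ∂volume.restrict Ω, c ≤ q x) :
    ∀ᵐ x ∂volume.restrict Ω,
      q x = sSup { t : ℝ | ∃ ψ, SigmaPlus Ω ψ ∧
        (∀ᵐ y ∂volume.restrict Ω, ψ y ≤ q y) ∧ t = ψ x } := by
  obtain ⟨c, hc, hcq⟩ := hqpos
  set f := hq.1.aemeasurable.mk q
  have hqf : q =ᵐ[volume.restrict Ω] f := hq.1.aemeasurable.ae_eq_mk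
  have hψq : ∀ ψ : EuclideanSpace ℝ (Fin n) → ℝ, (∀ᵐ y ∂volume.restrict Ω, ψ y ≤ q y) ↔
      ∀ᵐ y ∂volume.restrict Ω, ψ y ≤ f y := fun ψ =>
    eventually_congr (hqf.mono fun y hy => by rw [hy])
  have hcf : ∀ᵐ y ∂volume.restrict Ω, c ≤ f y := by
    filter_upwards [hcq, hqf] with y hy hyf
    rwa [← hyf]
  filter_upwards [ae_isLUB_sigmaPlus hΩ hq.1.aemeasurable.measurable_mk hc hcf, hqf]
    with x hx hqx
  simp_rw [hψq, hqx]
  exact hx.csSup_eq hx.nonempty |>.symm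

/-- For every `q ∈ L^∞₊(Ω)` on a bounded open set `Ω`, one has
`q(x) = sup { ψ(x) : ψ ∈ Σ₊, ψ ≤ q a.e. }` for almost every `x ∈ Ω`. -/
theorem sup_density_one_simple_functions
    (Ω : Set (EuclideanSpace ℝ (Fin n))) (hΩ : IsOpen Ω) (hΩb : Bornology.IsBounded Ω)
    (q : EuclideanSpace ℝ (Fin n) → ℝ)
    (hq : MemLp q ⊤ (volume.restrict Ω))
    (hqpos : ∃ c > (0 : ℝ), ∀ᵐ x ∂volume.restrict Ω, c ≤ q x) :
    ∀ᵐ x ∂volume.restrict Ω,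
      q x = sSup { t : ℝ | ∃ ψ, SigmaPlus Ω ψ ∧
        (∀ᵐ y ∂volume.restrict Ω, ψ y ≤ q y) ∧ t = ψ x } :=
  sup_density_one_simple_functions_general Ω hΩ q hq hqpos
end

section
/- Abstract converse monotonicity via localized potentials: Let Ω ⊆ ℝⁿ be bounded open, q₀, q₁ ∈ L^∞(Ω), and suppose that for every measurable M ⊆ Ω of positive measure there exists a sequence (uᵏ) in a set S ⊆ L²(Ω) with ∫_M |uᵏ|² → ∞ and ∫_{Ω∖M}|uᵏ|² → 0. If inf_{u ∈ S} ∫_Ω (q₁ − q₀)|u|² dx > −∞, then q₀ ≤ q₁ almost everywhere in Ω. -/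
open MeasureTheory Filter Topology

variable {n : ℕ}

/-!
If `f = q₁ - q₀` fails to be a.e. nonnegative on `Ω`, then `f ≤ -δ` on a set `M ⊆ Ω` of positive measure.
Localized potentials on `M` make `∫_Ω f u² ≤ -δ ∫_M u² + C ∫_{Ω \ M} u²` tend to `-∞`, where
`C` is an essential upper bound of `f`; this contradicts the lower bound over `S`.
-/

namespace MeasureTheory

variable {α : Type*} [MeasurableSpace α] {μ : Measure α}

lemma exists_measurableSet_ae_le_neg_of_not_ae_nonneg {f : α → ℝ} (hf : AEMeasurable f μ)
    (h : ¬ ∀ᵐ x ∂μ, 0 ≤ f x) :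
    ∃ δ > 0, ∃ M, MeasurableSet M ∧ μ M ≠ 0 ∧ ∀ᵐ x ∂μ.restrict M, f x ≤ -δ := by
  set g := hf.mk f
  have hneg : μ {x | g x < 0} ≠ 0 := by
    refine fun h0 ↦ h ?_
    filter_upwards [hf.ae_eq_mk, measure_eq_zero_iff_ae_notMem.1 h0] with x hfg hx
    simpa [hfg] using hx
  have hcover : {x | g x < 0} ⊆ ⋃ k : ℕ, {x | g x ≤ -(1 / (k + 1))} := by
    intro x hx
    obtain ⟨k, hk⟩ := exists_nat_one_div_lt (neg_pos.2 (show g x < 0 from hx))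
    exact Set.mem_iUnion.2 ⟨k, by simp only [Set.mem_ofPred_eq]; linarith⟩
  obtain ⟨k, hk⟩ : ∃ k : ℕ, μ {x | g x ≤ -(1 / (k + 1))} ≠ 0 := by
    by_contra! hall
    exact hneg (measure_mono_null hcover (measure_iUnion_null hall))
  have hM : MeasurableSet {x | g x ≤ -(1 / (k + 1))} :=
    measurableSet_le hf.measurable_mk measurable_const
  refine ⟨1 / (k + 1), by positivity, _, hM, hk, ?_⟩
  filter_upwards [ae_restrict_of_ae hf.ae_eq_mk, ae_restrict_mem hM] with x hfg hx
  rwa [hfg]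

lemma setIntegral_mul_le_of_ae_le {Ω M : Set α} {f w : α → ℝ} {a b : ℝ}
    (hM : MeasurableSet M) (hMΩ : M ⊆ Ω) (hw : ∀ x, 0 ≤ w x)
    (hfM : ∀ᵐ x ∂μ.restrict M, f x ≤ a) (hfΩM : ∀ᵐ x ∂μ.restrict (Ω \ M), f x ≤ b)
    (hwi : IntegrableOn w Ω μ) (hfwi : IntegrableOn (fun x ↦ f x * w x) Ω μ) :
    ∫ x in Ω, f x * w x ∂μ ≤ a * ∫ x in M, w x ∂μ + b * ∫ x in Ω \ M, w x ∂μ := by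
  have hsplit := integral_inter_add_sdiff hM hfwi
  rw [Set.inter_eq_self_of_subset_right hMΩ] at hsplit
  rw [← hsplit, ← integral_const_mul, ← integral_const_mul]
  gcongr ?_ + ?_
  · refine integral_mono_ae (hfwi.mono_set hMΩ) ((hwi.mono_set hMΩ).const_mul a) ?_
    filter_upwards [hfM] with x hx using mul_le_mul_of_nonneg_right hx (hw x)
  · refine integral_mono_ae (hfwi.mono_set Set.sdiff_subset)
      ((hwi.mono_set Set.sdiff_subset).const_mul b) ?_
    filter_upwards [hfΩM] with x hx using mul_le_mul_of_nonneg_right hx (hw x)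

theorem ae_nonneg_of_localized_bddBelow {Ω : Set α} {f : α → ℝ} {S : Set (α → ℝ)}
    (hΩ : MeasurableSet Ω) (hf : MemLp f ⊤ (μ.restrict Ω))
    (hSL2 : ∀ u ∈ S, MemLp u 2 (μ.restrict Ω))
    (hloc : ∀ M : Set α, MeasurableSet M → M ⊆ Ω → 0 < μ M →
      ∃ u : ℕ → α → ℝ, (∀ k, u k ∈ S) ∧
        Tendsto (fun k ↦ ∫ x in M, (u k x) ^ 2 ∂μ) atTop atTop ∧
        Tendsto (fun k ↦ ∫ x in Ω \ M, (u k x) ^ 2 ∂μ) atTop (𝓝 0))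
    (hbdd : ∃ c : ℝ, ∀ u ∈ S, c ≤ ∫ x in Ω, f x * (u x) ^ 2 ∂μ) :
    ∀ᵐ x ∂μ.restrict Ω, 0 ≤ f x := by
  by_contra hneg
  obtain ⟨δ, hδ, M, hM, hμM, hfM⟩ :=
    exists_measurableSet_ae_le_neg_of_not_ae_nonneg hf.1.aemeasurable hneg
  rw [Measure.restrict_restrict hM] at hfM
  rw [Measure.restrict_apply hM] at hμM
  set C := lpNorm f ⊤ (μ.restrict Ω)
  have hfC : ∀ᵐ x ∂μ.restrict (Ω \ (M ∩ Ω)), f x ≤ C := by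
    refine ae_restrict_of_ae_restrict_of_subset Set.sdiff_subset ?_
    filter_upwards [ae_le_lpNorm_exponent_top hf] with x hx using (le_abs_self _).trans hx
  obtain ⟨u, huS, hMtop, hΩMzero⟩ :=
    hloc (M ∩ Ω) (hM.inter hΩ) Set.inter_subset_right (pos_iff_ne_zero.2 hμM)
  have hupper (k : ℕ) : ∫ x in Ω, f x * (u k x) ^ 2 ∂μ
      ≤ -δ * ∫ x in M ∩ Ω, (u k x) ^ 2 ∂μ + C * ∫ x in Ω \ (M ∩ Ω), (u k x) ^ 2 ∂μ :=
    have hsq := (hSL2 (u k) (huS k)).integrable_sq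
    setIntegral_mul_le_of_ae_le (hM.inter hΩ) Set.inter_subset_right (fun x ↦ sq_nonneg _)
      hfM hfC hsq (hsq.mul_of_top_right hf)
  have hbot : Tendsto (fun k ↦ -δ * ∫ x in M ∩ Ω, (u k x) ^ 2 ∂μ
      + C * ∫ x in Ω \ (M ∩ Ω), (u k x) ^ 2 ∂μ) atTop atBot :=
    ((tendsto_const_mul_atBot_of_neg (neg_neg_of_pos hδ)).2 hMtop).atBot_add
      (by simpa using hΩMzero.const_mul C)
  obtain ⟨c, hc⟩ := hbdd
  obtain ⟨k, hk⟩ := (hbot.eventually_lt_atBot c).exists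
  exact (hc (u k) (huS k)).not_gt (lt_of_le_of_lt (hupper k) hk)

end MeasureTheory

theorem abstract_converse_monotonicity_general
    (Ω : Set (EuclideanSpace ℝ (Fin n))) (hΩ : IsOpen Ω)
    (q₀ q₁ : EuclideanSpace ℝ (Fin n) → ℝ)
    (hq₀ : MemLp q₀ ⊤ (volume.restrict Ω)) (hq₁ : MemLp q₁ ⊤ (volume.restrict Ω))
    (S : Set (EuclideanSpace ℝ (Fin n) → ℝ))
    (hSL2 : ∀ u ∈ S, MemLp u 2 (volume.restrict Ω))
    (hloc : ∀ M : Set (EuclideanSpace ℝ (Fin n)), MeasurableSet M → M ⊆ Ω → 0 < volume M →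
      ∃ u : ℕ → EuclideanSpace ℝ (Fin n) → ℝ, (∀ k, u k ∈ S) ∧
        Tendsto (fun k => ∫ x in M, (u k x) ^ 2) atTop atTop ∧
        Tendsto (fun k => ∫ x in Ω \ M, (u k x) ^ 2) atTop (nhds 0))
    (hbdd : ∃ c : ℝ, ∀ u ∈ S, c ≤ ∫ x in Ω, (q₁ x - q₀ x) * (u x) ^ 2) :
    ∀ᵐ x ∂volume.restrict Ω, q₀ x ≤ q₁ x := by
  filter_upwards [ae_nonneg_of_localized_bddBelow hΩ.measurableSet (hq₁.sub hq₀) hSL2 hloc hbdd]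
    with x hx using sub_nonneg.1 hx

/-- Abstract converse monotonicity via localized potentials: if for every positive measure
subset `M ⊆ Ω` there is a sequence in `S ⊆ L²(Ω)` whose energy blows up on `M` and vanishes
on `Ω ∖ M`, and `∫_Ω (q₁ - q₀)|u|² dx` is bounded below over `u ∈ S`, then `q₀ ≤ q₁`
almost everywhere in `Ω`. -/
theorem abstract_converse_monotonicity
    (Ω : Set (EuclideanSpace ℝ (Fin n))) (hΩ : IsOpen Ω) (hΩb : Bornology.IsBounded Ω)
    (q₀ q₁ : EuclideanSpace ℝ (Fin n) → ℝ)
    (hq₀ : MemLp q₀ ⊤ (volume.restrict Ω)) (hq₁ : MemLp q₁ ⊤ (volume.restrict Ω))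
    (S : Set (EuclideanSpace ℝ (Fin n) → ℝ))
    (hSL2 : ∀ u ∈ S, MemLp u 2 (volume.restrict Ω))
    (hloc : ∀ M : Set (EuclideanSpace ℝ (Fin n)), MeasurableSet M → M ⊆ Ω → 0 < volume M →
      ∃ u : ℕ → EuclideanSpace ℝ (Fin n) → ℝ, (∀ k, u k ∈ S) ∧
        Tendsto (fun k => ∫ x in M, (u k x) ^ 2) atTop atTop ∧
        Tendsto (fun k => ∫ x in Ω \ M, (u k x) ^ 2) atTop (nhds 0))
    (hbdd : ∃ c : ℝ, ∀ u ∈ S, c ≤ ∫ x in Ω, (q₁ x - q₀ x) * (u x) ^ 2) :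
    ∀ᵐ x ∂volume.restrict Ω, q₀ x ≤ q₁ x :=
  abstract_converse_monotonicity_general Ω hΩ q₀ q₁ hq₀ hq₁ S hSL2 hloc hbdd
end

section
/- Fréchet derivative estimate for the DtN map (abstract form): Let q ∈ L^∞(Ω) with ess inf q > 0 and r ∈ L^∞(Ω) with ess inf(q + r) > 0. Suppose the symmetric bounded operators Λ(q+r) − Λ(q) − Λ'(q)r satisfy, for all F with ‖F‖ = 1, the two-sided bound 0 ≥ ⟨(Λ(q+r) − Λ(q) − Λ'(q)r)F, F⟩ ≥ ∫_Ω (q r/(q+r) − r)|u_q(F)|² dx, where ‖u_q(F)‖_{L²(Ω)} ≤ K. Then ‖Λ(q+r) − Λ(q) − Λ'(q)r‖ ≤ K² ‖r‖_{L^∞} · ‖r/(q+r)‖_{L^∞}, and consequently ‖Λ(q+r) − Λ(q) − Λ'(q)r‖ / ‖r‖_{L^∞} → 0 as ‖r‖_{L^∞} → 0. -/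
/-!
The remainder form is nonpositive and bounded below by `∫ (q r/(q+r) - r) u²`. Since
`r - q r/(q+r) = r · r/(q+r)` with `q + r > 0`, that integrand is bounded in absolute value by
`‖r‖_∞ ‖r/(q+r)‖_∞ u²`, which gives the first estimate. Once `‖r‖_∞ ≤ c/2` we have `q + r ≥ c/2`,
hence `‖r/(q+r)‖_∞ ≤ 2‖r‖_∞/c`, and the remainder is `O(‖r‖_∞²)`.
-/

open MeasureTheory

section EssentialBounds

variable {α : Type*} {m : MeasurableSpace α} {μ : Measure α}

lemma ae_abs_le_toReal_eLpNorm_top {f : α → ℝ} (hf : eLpNorm f ⊤ μ ≠ ⊤) :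
    ∀ᵐ x ∂μ, |f x| ≤ (eLpNorm f ⊤ μ).toReal := by
  rw [eLpNorm_exponent_top] at hf ⊢
  filter_upwards [enorm_ae_le_eLpNormEssSup f μ] with x hx
  simpa [Real.norm_eq_abs] using ENNReal.toReal_mono hf hx

lemma sub_mul_div_add_eq {q r : ℝ} (h : q + r ≠ 0) :
    r - q * r / (q + r) = r * (r / (q + r)) := by
  field_simp
  ring

variable {q r : α → ℝ} {c : ℝ}

lemma eLpNorm_top_div_add_le (hc : 0 < c) (hqr : ∀ᵐ x ∂μ, c ≤ q x + r x)
    (hr : eLpNorm r ⊤ μ ≠ ⊤) :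
    eLpNorm (fun x => r x / (q x + r x)) ⊤ μ ≤
      ENNReal.ofReal ((eLpNorm r ⊤ μ).toReal / c) := by
  rw [eLpNorm_exponent_top]
  refine eLpNormEssSup_le_of_ae_bound ?_
  filter_upwards [hqr, ae_abs_le_toReal_eLpNorm_top hr] with x hqrx hrx
  rw [Real.norm_eq_abs, abs_div, abs_of_pos (hc.trans_le hqrx)]
  exact div_le_div₀ ENNReal.toReal_nonneg hrx hc hqrx

lemma toReal_eLpNorm_top_div_add_le (hc : 0 < c) (hqr : ∀ᵐ x ∂μ, c ≤ q x + r x)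
    (hr : eLpNorm r ⊤ μ ≠ ⊤) :
    (eLpNorm (fun x => r x / (q x + r x)) ⊤ μ).toReal ≤ (eLpNorm r ⊤ μ).toReal / c :=
  ENNReal.toReal_le_of_le_ofReal (by positivity) (eLpNorm_top_div_add_le hc hqr hr)

lemma integral_sub_mul_div_add_mul_sq_le (hc : 0 < c) (hqr : ∀ᵐ x ∂μ, c ≤ q x + r x)
    (hr : eLpNorm r ⊤ μ ≠ ⊤) {v : α → ℝ} (hv : MemLp v 2 μ) :
    ∫ x, (r x - q x * r x / (q x + r x)) * v x ^ 2 ∂μ ≤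
      (eLpNorm r ⊤ μ).toReal * (eLpNorm (fun x => r x / (q x + r x)) ⊤ μ).toReal *
        ∫ x, v x ^ 2 ∂μ := by
  have hs : eLpNorm (fun x => r x / (q x + r x)) ⊤ μ ≠ ⊤ :=
    ne_top_of_le_ne_top ENNReal.ofReal_ne_top (eLpNorm_top_div_add_le hc hqr hr)
  rw [← integral_const_mul]
  refine integral_mono_of_nonneg ?_ (hv.integrable_sq.const_mul _) ?_
  · filter_upwards [hqr] with x hqrx
    have hpos : 0 < q x + r x := hc.trans_le hqrx
    rw [Pi.zero_apply, sub_mul_div_add_eq hpos.ne', mul_div_assoc']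
    exact mul_nonneg (div_nonneg (mul_self_nonneg _) hpos.le) (sq_nonneg _)
  · filter_upwards [hqr, ae_abs_le_toReal_eLpNorm_top hr, ae_abs_le_toReal_eLpNorm_top hs]
      with x hqrx hrx hsx
    rw [sub_mul_div_add_eq (hc.trans_le hqrx).ne']
    refine mul_le_mul_of_nonneg_right ?_ (sq_nonneg _)
    calc r x * (r x / (q x + r x)) ≤ |r x| * |r x / (q x + r x)| := by
          rw [← abs_mul]; exact le_abs_self _
      _ ≤ _ := mul_le_mul hrx hsx (abs_nonneg _) ENNReal.toReal_nonneg

lemma abs_le_of_integral_mul_sq_le (hc : 0 < c) (hqr : ∀ᵐ x ∂μ, c ≤ q x + r x)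
    (hr : eLpNorm r ⊤ μ ≠ ⊤) {v : α → ℝ} (hv : MemLp v 2 μ) {a K : ℝ} (ha : a ≤ 0)
    (hlow : ∫ x, (q x * r x / (q x + r x) - r x) * v x ^ 2 ∂μ ≤ a)
    (hvK : ∫ x, v x ^ 2 ∂μ ≤ K ^ 2) :
    |a| ≤ K ^ 2 * (eLpNorm r ⊤ μ).toReal *
      (eLpNorm (fun x => r x / (q x + r x)) ⊤ μ).toReal := by
  have hflip : ∫ x, (r x - q x * r x / (q x + r x)) * v x ^ 2 ∂μ =
      -∫ x, (q x * r x / (q x + r x) - r x) * v x ^ 2 ∂μ := by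
    rw [← integral_neg]
    congr 1 with x
    ring
  rw [abs_of_nonpos ha]
  calc -a ≤ ∫ x, (r x - q x * r x / (q x + r x)) * v x ^ 2 ∂μ := by linarith
    _ ≤ (eLpNorm r ⊤ μ).toReal * (eLpNorm (fun x => r x / (q x + r x)) ⊤ μ).toReal *
        ∫ x, v x ^ 2 ∂μ := integral_sub_mul_div_add_mul_sq_le hc hqr hr hv
    _ ≤ (eLpNorm r ⊤ μ).toReal * (eLpNorm (fun x => r x / (q x + r x)) ⊤ μ).toReal *
        K ^ 2 := by gcongr
    _ = _ := by ring

end EssentialBounds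

variable {n : ℕ}

theorem frechet_derivative_estimate_general
    {H : Type*} [NormedAddCommGroup H] [InnerProductSpace ℝ H]
    (Ω : Set (EuclideanSpace ℝ (Fin n)))
    (q : EuclideanSpace ℝ (Fin n) → ℝ)
    (c : ℝ) (hc : 0 < c) (hqc : ∀ᵐ x ∂volume.restrict Ω, c ≤ q x)
    (K : ℝ)
    -- the quadratic form of `Λ(q+r) - Λ(q) - Λ'(q)r` and the solution operator
    (A : (EuclideanSpace ℝ (Fin n) → ℝ) → H → H → ℝ)
    (u : H → EuclideanSpace ℝ (Fin n) → ℝ)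
    (huL2 : ∀ F : H, MemLp (u F) 2 (volume.restrict Ω))
    (huK : ∀ F : H, ‖F‖ = 1 → ∫ x in Ω, (u F x) ^ 2 ≤ K ^ 2)
    -- admissibility of the perturbation `r`, including the two-sided quadratic form bound
    (Adm : (EuclideanSpace ℝ (Fin n) → ℝ) → Prop)
    (hAdm : ∀ r, Adm r →
      MemLp r ⊤ (volume.restrict Ω) ∧
      (∃ c' > (0 : ℝ), ∀ᵐ x ∂volume.restrict Ω, c' ≤ q x + r x) ∧
      (∀ F : H, ‖F‖ = 1 →
        A r F F ≤ 0 ∧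
        ∫ x in Ω, (q x * r x / (q x + r x) - r x) * (u F x) ^ 2 ≤ A r F F)) :
    (∀ r, Adm r → ∀ F : H, ‖F‖ = 1 →
      |A r F F| ≤ K ^ 2 * (eLpNorm r ⊤ (volume.restrict Ω)).toReal *
        (eLpNorm (fun x => r x / (q x + r x)) ⊤ (volume.restrict Ω)).toReal) ∧
    (∀ ε > (0 : ℝ), ∃ δ > (0 : ℝ), ∀ r, Adm r →
      (eLpNorm r ⊤ (volume.restrict Ω)).toReal ≤ δ →
      ∀ F : H, ‖F‖ = 1 →
        |A r F F| ≤ ε * (eLpNorm r ⊤ (volume.restrict Ω)).toReal) := by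
  have hbound : ∀ r, Adm r → ∀ F : H, ‖F‖ = 1 →
      |A r F F| ≤ K ^ 2 * (eLpNorm r ⊤ (volume.restrict Ω)).toReal *
        (eLpNorm (fun x => r x / (q x + r x)) ⊤ (volume.restrict Ω)).toReal := by
    intro r hr F hF
    obtain ⟨hrL, ⟨c', hc', hqr⟩, hquad⟩ := hAdm r hr
    exact abs_le_of_integral_mul_sq_le hc' hqr hrL.eLpNorm_ne_top (huL2 F) (hquad F hF).1
      (hquad F hF).2 (huK F hF)
  refine ⟨hbound, fun ε hε => ⟨min (c / 2) (ε * c / (2 * (K ^ 2 + 1))), by positivity, ?_⟩⟩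
  intro r hr hsmall F hF
  set Mr := (eLpNorm r ⊤ (volume.restrict Ω)).toReal
  have hr_fin := (hAdm r hr).1.eLpNorm_ne_top
  have hMr_half : Mr ≤ c / 2 := hsmall.trans (min_le_left _ _)
  have hMr_eps : Mr * (2 * (K ^ 2 + 1)) ≤ ε * c :=
    (le_div_iff₀ (by positivity)).1 (hsmall.trans (min_le_right _ _))
  -- `‖r‖_∞ ≤ c/2` keeps `q + r` above `c/2`
  have hqr : ∀ᵐ x ∂volume.restrict Ω, c / 2 ≤ q x + r x := by
    filter_upwards [hqc, ae_abs_le_toReal_eLpNorm_top hr_fin] with x hqx hrx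
    linarith [neg_abs_le (r x)]
  calc |A r F F| ≤ K ^ 2 * Mr *
        (eLpNorm (fun x => r x / (q x + r x)) ⊤ (volume.restrict Ω)).toReal := hbound r hr F hF
    _ ≤ K ^ 2 * Mr * (Mr / (c / 2)) := by
        gcongr; exact toReal_eLpNorm_top_div_add_le (half_pos hc) hqr hr_fin
    _ ≤ ε * Mr := by
        rw [show K ^ 2 * Mr * (Mr / (c / 2)) = Mr * (2 * K ^ 2 * Mr / c) by ring, mul_comm ε]
        gcongr
        rw [div_le_iff₀ hc]
        nlinarith [sq_nonneg K, ENNReal.toReal_nonneg (a := eLpNorm r ⊤ (volume.restrict Ω))]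

/-- Fréchet derivative estimate for the DtN map (abstract form). `A r` stands for the
symmetric quadratic form of `Λ(q+r) - Λ(q) - Λ'(q)r` on the space `H` of exterior data,
`u r F` stands for the solution `u_q(F)` (which does not depend on `r`, but is kept general),
and `Adm r` collects the admissibility of the perturbation `r` together with the two-sided
quadratic form bound. The conclusion is the norm estimate
`‖Λ(q+r) - Λ(q) - Λ'(q)r‖ ≤ K²‖r‖_∞‖r/(q+r)‖_∞` (with the norm computed as
`sup_{‖F‖=1} |⟨A F, F⟩|`), and the consequent `o(‖r‖_∞)` behaviour as `‖r‖_∞ → 0`. -/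
theorem frechet_derivative_estimate
    {H : Type*} [NormedAddCommGroup H] [InnerProductSpace ℝ H]
    (Ω : Set (EuclideanSpace ℝ (Fin n)))
    (q : EuclideanSpace ℝ (Fin n) → ℝ)
    (hq : MemLp q ⊤ (volume.restrict Ω))
    (c : ℝ) (hc : 0 < c) (hqc : ∀ᵐ x ∂volume.restrict Ω, c ≤ q x)
    (K : ℝ) (hK : 0 ≤ K)
    -- the quadratic form of `Λ(q+r) - Λ(q) - Λ'(q)r` and the solution operator
    (A : (EuclideanSpace ℝ (Fin n) → ℝ) → H → H → ℝ)
    (u : H → EuclideanSpace ℝ (Fin n) → ℝ)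
    (hsym : ∀ r F G, A r F G = A r G F)
    (huL2 : ∀ F : H, MemLp (u F) 2 (volume.restrict Ω))
    (huK : ∀ F : H, ‖F‖ = 1 → ∫ x in Ω, (u F x) ^ 2 ≤ K ^ 2)
    -- admissibility of the perturbation `r`, including the two-sided quadratic form bound
    (Adm : (EuclideanSpace ℝ (Fin n) → ℝ) → Prop)
    (hAdm : ∀ r, Adm r →
      MemLp r ⊤ (volume.restrict Ω) ∧
      (∃ c' > (0 : ℝ), ∀ᵐ x ∂volume.restrict Ω, c' ≤ q x + r x) ∧
      (∀ F : H, ‖F‖ = 1 →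
        A r F F ≤ 0 ∧
        ∫ x in Ω, (q x * r x / (q x + r x) - r x) * (u F x) ^ 2 ≤ A r F F)) :
    (∀ r, Adm r → ∀ F : H, ‖F‖ = 1 →
      |A r F F| ≤ K ^ 2 * (eLpNorm r ⊤ (volume.restrict Ω)).toReal *
        (eLpNorm (fun x => r x / (q x + r x)) ⊤ (volume.restrict Ω)).toReal) ∧
    (∀ ε > (0 : ℝ), ∃ δ > (0 : ℝ), ∀ r, Adm r →
      (eLpNorm r ⊤ (volume.restrict Ω)).toReal ≤ δ →
      ∀ F : H, ‖F‖ = 1 →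
        |A r F F| ≤ ε * (eLpNorm r ⊤ (volume.restrict Ω)).toReal) :=
  frechet_derivative_estimate_general Ω q c hc hqc K A u huL2 huK Adm hAdm
end
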